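/- arXiv:2105.04661 — 2 statements merged into one kernel-verified Lean document; each statement's English description precedes it below -/
import Mathlib

section
/- For any propositions φ, ψ, E, minimal logic proves ((¬(φ ∨ ψ)) → E) → ((((¬φ → E) ∨ (¬ψ → E)) → E) → E), where ¬θ := θ → False. -/
theorem stmt4 (φ ψ E : Prop) :
    (((φ ∨ ψ) → False) → E) →
      (((((φ → False) → E) ∨ ((ψ → False) → E)) → E) → E) :=
  -- `k` is applied twice: the left disjunct is proved by reusing `k` on the right one.
  fun h k => k (Or.inl fun hφ => k (Or.inr fun hψ => h (not_or_intro hφ hψ)))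
end

section
/- For any propositions φ, ψ, E, intuitionistic logic proves (¬_E¬φ → ¬_E¬_E ψ) → ¬_E¬_E(φ → ψ), i.e. (((¬φ → E) → ((ψ → E) → E)) → (((φ → ψ) → E) → E)), where ¬θ := θ → False. -/
theorem stmt7 (φ ψ E : Prop) :
    (((φ → False) → E) → ((ψ → E) → E)) → (((φ → ψ) → E) → E) :=
  fun h k => h (fun hnφ => k fun hφ => (hnφ hφ).elim) (fun hψ => k fun _ => hψ)
end
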